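/- The localization B[Δ^{−1}] is a free module over P[Δ^{−1}] of rank 2^{2n}, with basis the 4^n products X_I·Y_J over all subsets I, J ⊆ {1,…,n} (the empty products being 1). Equivalently, the P[Δ^{−1}]-algebra map from the exterior algebra over P[Δ^{−1}] on 2n generators sending the i-th generators to X_i and Y_i respectively is an isomorphism onto B[Δ^{−1}]. -/

import Mathlib

open scoped BigOperators

set_option synthInstance.maxHeartbeats 1000000
set_option maxHeartbeats 1000000

noncomputable section

variable (R : Type) [CommRing R] (n : ℕ)

/-- The polynomial ring `R[t_1, …, t_n]`. -/
abbrev Pn := MvPolynomial (Fin n) R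

/-- `B`: the exterior algebra over `Pn` on the `2n` generators `u_1,…,u_n,v_1,…,v_n`. -/
abbrev Bn := ExteriorAlgebra (Pn R n) ((Fin n ⊕ Fin n) → Pn R n)

/-- The variable `t_i`. -/
def tv (i : Fin n) : Pn R n := MvPolynomial.X i

/-- The exterior generator `u_i`. -/
def uu (i : Fin n) : Bn R n := ExteriorAlgebra.ι (Pn R n) (Pi.single (Sum.inl i) 1)

/-- The exterior generator `v_i`. -/
def vv (i : Fin n) : Bn R n := ExteriorAlgebra.ι (Pn R n) (Pi.single (Sum.inr i) 1)

/-- `X_l = ∑ t_i^(l-1) u_i` (indices `i` run over `Fin n`, `l ≥ 1`). -/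
def Xel (l : ℕ) : Bn R n :=
  ∑ i : Fin n, algebraMap (Pn R n) (Bn R n) (tv R n i ^ (l - 1)) * uu R n i

/-- `Y_l = ∑ t_i^(l-1) v_i`. -/
def Yel (l : ℕ) : Bn R n :=
  ∑ i : Fin n, algebraMap (Pn R n) (Bn R n) (tv R n i ^ (l - 1)) * vv R n i

/-- `X_I`, the product of the `X_{i+1}` for `i ∈ I`, in increasing order. -/
def XI (I : Finset (Fin n)) : Bn R n := ((I.sort (· ≤ ·)).map fun i => Xel R n (i.1 + 1)).prod

/-- `Y_I`, the product of the `Y_{i+1}` for `i ∈ I`, in increasing order. -/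
def YI (I : Finset (Fin n)) : Bn R n := ((I.sort (· ≤ ·)).map fun i => Yel R n (i.1 + 1)).prod

/-- `(1 + p s)⁻¹ = ∑ (-p)^k s^k`, the inverse of `1 + p s` in `Pn[[s]]`. -/
def invOnePlus (p : Pn R n) : PowerSeries (Pn R n) := PowerSeries.mk fun k => (-p) ^ k

/-- The `i`-th factor `1 + s u_i v_i (1 + t_i s)⁻¹` of the power series defining the `Z_l`. -/
def Zfactor (i : Fin n) : PowerSeries (Bn R n) :=
  1 + PowerSeries.C (uu R n i * vv R n i) *
    PowerSeries.map (algebraMap (Pn R n) (Bn R n)) (PowerSeries.X * invOnePlus R n (tv R n i))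

/-- The power series `∏_{i=1}^n (1 + s u_i v_i (1 + t_i s)⁻¹) ∈ B[[s]]`. -/
def Zseries : PowerSeries (Bn R n) := ((List.finRange n).map (Zfactor R n)).prod

/-- `Z_l`, the coefficient of `s^l` in `Zseries`. -/
def Zel (l : ℕ) : Bn R n := PowerSeries.coeff l (Zseries R n)

/-- The Vandermonde matrix `V = (t_j^(i-1))`. -/
def Vmat : Matrix (Fin n) (Fin n) (Pn R n) := Matrix.of fun i j => tv R n j ^ (i : ℕ)

/-- The Vandermonde determinant `Δ = det V = ∏_{i<j} (t_j - t_i)`. -/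
def Dl : Pn R n := (Vmat R n).det


/-- The localization `P[Δ⁻¹]`. -/
abbrev Ploc (n : ℕ) := Localization.Away (Dl ℤ n)

/-- `B[Δ⁻¹]`, realized as the exterior algebra over `P[Δ⁻¹]` on the generators `u_i, v_i`. -/
abbrev Bloc (n : ℕ) := ExteriorAlgebra (Ploc n) ((Fin n ⊕ Fin n) → Ploc n)

/-- The image of `t_i` in `P[Δ⁻¹]`. -/
def tL (n : ℕ) (i : Fin n) : Ploc n := algebraMap (Pn ℤ n) (Ploc n) (tv ℤ n i)

/-- The generator `u_i` of `B[Δ⁻¹]`. -/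
def uL (n : ℕ) (i : Fin n) : Bloc n := ExteriorAlgebra.ι (Ploc n) (Pi.single (Sum.inl i) 1)

/-- The generator `v_i` of `B[Δ⁻¹]`. -/
def vL (n : ℕ) (i : Fin n) : Bloc n := ExteriorAlgebra.ι (Ploc n) (Pi.single (Sum.inr i) 1)

/-- `X_l ∈ B[Δ⁻¹]`. -/
def XelL (n : ℕ) (l : ℕ) : Bloc n :=
  ∑ i : Fin n, algebraMap (Ploc n) (Bloc n) (tL n i ^ (l - 1)) * uL n i

/-- `Y_l ∈ B[Δ⁻¹]`. -/
def YelL (n : ℕ) (l : ℕ) : Bloc n :=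
  ∑ i : Fin n, algebraMap (Ploc n) (Bloc n) (tL n i ^ (l - 1)) * vL n i

/-- `X_I ∈ B[Δ⁻¹]` (product in increasing order). -/
def XIL (n : ℕ) (I : Finset (Fin n)) : Bloc n :=
  ((I.sort (· ≤ ·)).map fun i => XelL n (i.1 + 1)).prod

/-- `Y_I ∈ B[Δ⁻¹]` (product in increasing order). -/
def YIL (n : ℕ) (I : Finset (Fin n)) : Bloc n :=
  ((I.sort (· ≤ ·)).map fun i => YelL n (i.1 + 1)).prod

/-- The family of the `4^n` products `X_I·Y_J`. -/
def famL (n : ℕ) : Finset (Fin n) × Finset (Fin n) → Bloc n := fun p => XIL n p.1 * YIL n p.2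

/-!
The rows of `diag(V, V)`, with `V` the Vandermonde matrix, are the coefficient vectors of
`X_1, …, X_n, Y_1, …, Y_n` in the generators `u_i, v_i`. Since `det V = Δ` is a unit in
`P[Δ⁻¹]`, these vectors form a basis of the generating module, and the ordered exterior
monomials in any basis form a basis of the exterior algebra; ordering the `X`'s before the
`Y`'s, these monomials are exactly the products `X_I·Y_J`.
-/

open Module

namespace Finset

variable {α β : Type*} [LinearOrder α] [LinearOrder β]

def disjSumLexEquiv : Finset α × Finset β ≃ Finset (α ⊕ₗ β) :=
  (sumEquiv (α := α) (β := β)).symm.toEquiv.trans (Equiv.finsetCongr toLex)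

theorem sort_disjSumLexEquiv (s : Finset α) (t : Finset β) :
    (disjSumLexEquiv (s, t)).sort = s.sort.map Sum.inlₗ ++ t.sort.map Sum.inrₗ := by
  refine List.SortedLT.eq_of_mem_iff (sortedLT_sort _) ?_ fun x => ?_
  · refine List.sortedLT_iff_pairwise.mpr (List.pairwise_append.mpr ⟨?_, ?_, ?_⟩)
    · exact ((Sum.Lex.inl_strictMono.sortedLT_listMap).mpr (sortedLT_sort s)).pairwise
    · exact ((Sum.Lex.inr_strictMono.sortedLT_listMap).mpr (sortedLT_sort t)).pairwise
    · simp only [List.mem_map, mem_sort]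
      rintro _ ⟨a, -, rfl⟩ _ ⟨b, -, rfl⟩
      exact Sum.Lex.inl_lt_inr a b
  · obtain ⟨a | b, rfl⟩ := toLex.surjective x <;> simp [disjSumLexEquiv]

end Finset

namespace Module.Basis

variable {K M : Type*} [CommRing K] [AddCommGroup M] [Module K M]

theorem exteriorAlgebra_apply_eq_prod_sort {I : Type*} [LinearOrder I] (b : Basis I K M)
    (s : Finset I) :
    b.ExteriorAlgebra s = (s.sort.map fun i => ExteriorAlgebra.ι K (b i)).prod := by
  rw [ExteriorAlgebra.basis_apply_ofCard b rfl, ExteriorAlgebra.ιMulti_family,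
    ExteriorAlgebra.ιMulti_apply, List.ofFn_eq_map,
    ← Finset.listMap_orderEmbOfFin_finRange s rfl, List.map_map]
  rfl

theorem exteriorAlgebra_disjSumLexEquiv {α β : Type*} [LinearOrder α] [LinearOrder β]
    (b : Basis (α ⊕ₗ β) K M) (s : Finset α) (t : Finset β) :
    b.ExteriorAlgebra (Finset.disjSumLexEquiv (s, t)) =
      (s.sort.map fun i => ExteriorAlgebra.ι K (b (Sum.inlₗ i))).prod *
        (t.sort.map fun j => ExteriorAlgebra.ι K (b (Sum.inrₗ j))).prod := by
  rw [exteriorAlgebra_apply_eq_prod_sort, Finset.sort_disjSumLexEquiv, List.map_append,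
    List.prod_append, List.map_map, List.map_map]
  rfl

end Module.Basis

namespace Matrix

variable {K ι : Type*} [CommRing K] [Fintype ι] [DecidableEq ι]

theorem span_row_eq_top_of_isUnit_det {A : Matrix ι ι K} (hA : IsUnit A.det) :
    Submodule.span K (Set.range A.row) = ⊤ :=
  ((Basis.is_basis_iff_det (Pi.basisFun K ι)).mpr (by rwa [Pi.basisFun_det_apply])).2

def rowBasis (A : Matrix ι ι K) (hA : IsUnit A.det) : Basis ι K (ι → K) :=
  Basis.mk (linearIndependent_rows_of_isUnit ((isUnit_iff_isUnit_det A).mpr hA))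
    (span_row_eq_top_of_isUnit_det hA).ge

@[simp]
theorem rowBasis_apply (A : Matrix ι ι K) (hA : IsUnit A.det) (i : ι) :
    A.rowBasis hA i = A i :=
  Basis.mk_apply ..

end Matrix

def blockVandermonde (n : ℕ) : Matrix (Fin n ⊕ Fin n) (Fin n ⊕ Fin n) (Ploc n) :=
  let V := (Vmat ℤ n).map (algebraMap (Pn ℤ n) (Ploc n))
  Matrix.fromBlocks V 0 0 V

theorem isUnit_det_blockVandermonde (n : ℕ) : IsUnit (blockVandermonde n).det := by
  have hV : ((Vmat ℤ n).map (algebraMap (Pn ℤ n) (Ploc n))).det = algebraMap _ _ (Dl ℤ n) :=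
    (RingHom.map_det _ _).symm
  rw [blockVandermonde, Matrix.det_fromBlocks_zero₂₁, hV]
  exact (IsLocalization.Away.algebraMap_isUnit _).mul (IsLocalization.Away.algebraMap_isUnit _)

def xyBasis (n : ℕ) : Basis (Fin n ⊕ₗ Fin n) (Ploc n) ((Fin n ⊕ Fin n) → Ploc n) :=
  ((blockVandermonde n).rowBasis (isUnit_det_blockVandermonde n)).reindex toLex

theorem ι_xyBasis_inl (n : ℕ) (i : Fin n) :
    ExteriorAlgebra.ι (Ploc n) (xyBasis n (Sum.inlₗ i)) = XelL n (i + 1) := by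
  have h : xyBasis n (Sum.inlₗ i) = ∑ j, tL n j ^ (i : ℕ) • Pi.single (Sum.inl j) 1 := by
    ext (k | k) <;> simp [xyBasis, blockVandermonde, Vmat, tv, tL, Pi.single_apply]
  rw [h, XelL, map_sum]
  refine Finset.sum_congr rfl fun j _ => ?_
  rw [map_smul, Algebra.smul_def, Nat.add_sub_cancel]
  rfl

theorem ι_xyBasis_inr (n : ℕ) (i : Fin n) :
    ExteriorAlgebra.ι (Ploc n) (xyBasis n (Sum.inrₗ i)) = YelL n (i + 1) := by
  have h : xyBasis n (Sum.inrₗ i) = ∑ j, tL n j ^ (i : ℕ) • Pi.single (Sum.inr j) 1 := by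
    ext (k | k) <;> simp [xyBasis, blockVandermonde, Vmat, tv, tL, Pi.single_apply]
  rw [h, YelL, map_sum]
  refine Finset.sum_congr rfl fun j _ => ?_
  rw [map_smul, Algebra.smul_def, Nat.add_sub_cancel]
  rfl

theorem famL_eq_exteriorAlgebra_xyBasis (n : ℕ) (p : Finset (Fin n) × Finset (Fin n)) :
    famL n p = (xyBasis n).ExteriorAlgebra (Finset.disjSumLexEquiv p) := by
  rw [Module.Basis.exteriorAlgebra_disjSumLexEquiv]
  simp only [ι_xyBasis_inl, ι_xyBasis_inr]
  rfl

theorem bloc_free_on_XIYJ_general (n : ℕ) :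
    LinearIndependent (Ploc n) (famL n) ∧
      Submodule.span (Ploc n) (Set.range (famL n)) = ⊤ := by
  let b := (xyBasis n).ExteriorAlgebra.reindex Finset.disjSumLexEquiv.symm
  have hb : ⇑b = famL n := funext fun p => by
    simp only [b, Basis.reindex_apply, Equiv.symm_symm, famL_eq_exteriorAlgebra_xyBasis]
  exact hb ▸ ⟨b.linearIndependent, b.span_eq⟩

/-- The localization `B[Δ⁻¹]` is a free `P[Δ⁻¹]`-module of rank `2^{2n}`, with basis the
`4^n` products `X_I·Y_J` over all subsets `I, J ⊆ {1,…,n}`. -/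
theorem bloc_free_on_XIYJ (n : ℕ) (hn : 1 ≤ n) :
    LinearIndependent (Ploc n) (famL n) ∧
      Submodule.span (Ploc n) (Set.range (famL n)) = ⊤ :=
  bloc_free_on_XIYJ_general n

end
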